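/- For every fixed b > 0, the function a ↦ Q₁(a, b) is strictly increasing on [0, ∞): if 0 ≤ a₁ < a₂ then Q₁(a₁, b) < Q₁(a₂, b). -/

import Mathlib

open MeasureTheory Real

/-- Modified Bessel function of the first kind, order 0 (integral representation). -/
noncomputable def I0 (x : ℝ) : ℝ :=
  (1 / Real.pi) * ∫ θ in (0 : ℝ)..Real.pi, Real.exp (x * Real.cos θ)

/-- First-order Marcum Q-function. -/
noncomputable def marcumQ (a b : ℝ) : ℝ :=
  ∫ x in Set.Ioi b, x * Real.exp (-(x ^ 2 + a ^ 2) / 2) * I0 (a * x)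

open Set Filter Metric intervalIntegral

/-- Modified Bessel I₁ (integral representation). -/
noncomputable def besselI1 (x : ℝ) : ℝ :=
  (1 / Real.pi) * ∫ θ in (0 : ℝ)..Real.pi, Real.cos θ * Real.exp (x * Real.cos θ)

/-- Derivative of I₁'s integral representation. -/
noncomputable def besselJ (x : ℝ) : ℝ :=
  (1 / Real.pi) * ∫ θ in (0 : ℝ)..Real.pi, (Real.cos θ)^2 * Real.exp (x * Real.cos θ)

lemma hasDerivAt_trig (c : ℝ → ℝ) (hc : Continuous c) (hcb : ∀ θ, |c θ| ≤ 1) (x₀ : ℝ) :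
    HasDerivAt (fun x => ∫ θ in (0:ℝ)..Real.pi, c θ * Real.exp (x * Real.cos θ))
      (∫ θ in (0:ℝ)..Real.pi, c θ * Real.cos θ * Real.exp (x₀ * Real.cos θ)) x₀ := by
  have key := intervalIntegral.hasDerivAt_integral_of_dominated_loc_of_deriv_le
    (F := fun x θ => c θ * Real.exp (x * Real.cos θ))
    (F' := fun x θ => c θ * Real.cos θ * Real.exp (x * Real.cos θ))
    (x₀ := x₀) (a := (0:ℝ)) (b := Real.pi) (μ := volume)
    (bound := fun _ => Real.exp (|x₀| + 1))
    (Metric.ball_mem_nhds x₀ (by norm_num : (0:ℝ) < 1)) ?_ ?_ ?_ ?_ ?_ ?_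
  · exact key.2
  · filter_upwards with x
    exact ((hc.mul (Real.continuous_exp.comp (continuous_const.mul Real.continuous_cos))).aestronglyMeasurable).restrict
  · exact ((hc.mul (Real.continuous_exp.comp (continuous_const.mul Real.continuous_cos))).intervalIntegrable _ _)
  · exact (((hc.mul Real.continuous_cos).mul (Real.continuous_exp.comp (continuous_const.mul Real.continuous_cos))).aestronglyMeasurable).restrict
  · filter_upwards with θ hθ x hx
    have h1 : |c θ * Real.cos θ| ≤ 1 := by
      calc |c θ * Real.cos θ| = |c θ| * |Real.cos θ| := abs_mul _ _
        _ ≤ 1 * 1 := mul_le_mul (hcb θ) (Real.abs_cos_le_one θ) (abs_nonneg _) zero_le_one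
        _ = 1 := one_mul 1
    have h2 : x * Real.cos θ ≤ |x₀| + 1 := by
      have hx' : |x| ≤ |x₀| + 1 := by
        have h3 : |x - x₀| < 1 := mem_ball_iff_norm.mp hx
        calc |x| = |x₀ + (x - x₀)| := by ring_nf
          _ ≤ |x₀| + |x - x₀| := abs_add_le _ _
          _ ≤ |x₀| + 1 := by linarith
      calc x * Real.cos θ ≤ |x * Real.cos θ| := le_abs_self _
        _ = |x| * |Real.cos θ| := abs_mul _ _
        _ ≤ (|x₀| + 1) * 1 := mul_le_mul hx' (Real.abs_cos_le_one θ) (abs_nonneg _)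
              (by positivity)
        _ = |x₀| + 1 := mul_one _
    calc ‖c θ * Real.cos θ * Real.exp (x * Real.cos θ)‖
        = |c θ * Real.cos θ| * Real.exp (x * Real.cos θ) := by
          rw [Real.norm_eq_abs, abs_mul, abs_of_pos (Real.exp_pos _)]
      _ ≤ 1 * Real.exp (|x₀| + 1) :=
          mul_le_mul h1 (Real.exp_le_exp.mpr h2) (Real.exp_pos _).le zero_le_one
      _ = Real.exp (|x₀| + 1) := one_mul _
  · exact intervalIntegrable_const
  · filter_upwards with θ hθ x hx
    have h4 : HasDerivAt (fun x : ℝ => x * Real.cos θ) (Real.cos θ) x := by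
      simpa using (hasDerivAt_id x).mul_const (Real.cos θ)
    have h5 := (h4.exp).const_mul (c θ)
    exact h5.congr_deriv (by ring)

lemma hasDerivAt_I0 (x : ℝ) : HasDerivAt I0 (besselI1 x) x := by
  have := (hasDerivAt_trig (fun _ => 1) continuous_const (fun θ => by norm_num) x).const_mul (1 / Real.pi)
  simp only [one_mul] at this
  unfold I0 besselI1
  convert this using 2

lemma hasDerivAt_I1 (x : ℝ) : HasDerivAt besselI1 (besselJ x) x := by
  have := (hasDerivAt_trig Real.cos Real.continuous_cos (fun θ => Real.abs_cos_le_one θ) x).const_mul (1 / Real.pi)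
  unfold besselI1 besselJ
  convert this using 2
  congr 1
  ext θ
  ring
  congr 1
  ext θ
  ring

lemma continuous_I0 : Continuous I0 :=
  continuous_iff_continuousAt.mpr fun x => (hasDerivAt_I0 x).continuousAt

lemma continuous_I1 : Continuous besselI1 :=
  continuous_iff_continuousAt.mpr fun x => (hasDerivAt_I1 x).continuousAt

attribute [fun_prop] continuous_I0 continuous_I1

lemma bessel_identity (t : ℝ) : besselI1 t + t * besselJ t = t * I0 t := by
  have cA : Continuous fun θ => Real.cos θ * Real.exp (t * Real.cos θ) := by fun_prop
  have cB : Continuous fun θ => (Real.cos θ)^2 * Real.exp (t * Real.cos θ) := by fun_prop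
  have cC : Continuous fun θ => Real.exp (t * Real.cos θ) := by fun_prop
  have h0 : ∫ θ in (0:ℝ)..Real.pi,
      (Real.cos θ * Real.exp (t * Real.cos θ) +
        (t * ((Real.cos θ)^2 * Real.exp (t * Real.cos θ)) - t * Real.exp (t * Real.cos θ))) = 0 := by
    have hderiv : ∀ θ ∈ Set.uIcc (0:ℝ) Real.pi,
        HasDerivAt (fun θ => Real.sin θ * Real.exp (t * Real.cos θ))
          (Real.cos θ * Real.exp (t * Real.cos θ) +
            (t * ((Real.cos θ)^2 * Real.exp (t * Real.cos θ)) - t * Real.exp (t * Real.cos θ))) θ := by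
      intro θ _
      have h := (Real.hasDerivAt_sin θ).mul (((Real.hasDerivAt_cos θ).const_mul t).exp)
      have hs := Real.sin_sq_add_cos_sq θ
      exact h.congr_deriv (by linear_combination (-(t * Real.exp (t * Real.cos θ))) * hs)
    have hint : IntervalIntegrable (fun θ =>
        Real.cos θ * Real.exp (t * Real.cos θ) +
          (t * ((Real.cos θ)^2 * Real.exp (t * Real.cos θ)) - t * Real.exp (t * Real.cos θ)))
        volume (0:ℝ) Real.pi :=
      Continuous.intervalIntegrable (by fun_prop) _ _
    rw [intervalIntegral.integral_eq_sub_of_hasDerivAt hderiv hint]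
    simp
  rw [intervalIntegral.integral_add (cA.intervalIntegrable _ _)
      (((cB.intervalIntegrable (0:ℝ) Real.pi).const_mul t).sub ((cC.intervalIntegrable _ _).const_mul t)),
    intervalIntegral.integral_sub ((cB.intervalIntegrable (0:ℝ) Real.pi).const_mul t)
      ((cC.intervalIntegrable _ _).const_mul t),
    intervalIntegral.integral_const_mul, intervalIntegral.integral_const_mul] at h0
  unfold besselI1 besselJ I0
  have hπ : (Real.pi : ℝ) ≠ 0 := Real.pi_ne_zero
  field_simp
  simp only [mul_comm (Real.cos _) t]
  linarith [h0]

lemma trig_int_le (c : ℝ → ℝ) (hcb : ∀ θ, |c θ| ≤ 1) (x : ℝ) :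
    |∫ θ in (0:ℝ)..Real.pi, c θ * Real.exp (x * Real.cos θ)| ≤ Real.pi * Real.exp |x| := by
  have h := intervalIntegral.norm_integral_le_of_norm_le_const
    (C := Real.exp |x|) (f := fun θ => c θ * Real.exp (x * Real.cos θ))
    (a := (0:ℝ)) (b := Real.pi) ?_
  · rw [Real.norm_eq_abs] at h
    calc |∫ θ in (0:ℝ)..Real.pi, c θ * Real.exp (x * Real.cos θ)|
        ≤ Real.exp |x| * |Real.pi - 0| := h
      _ = Real.pi * Real.exp |x| := by
          rw [sub_zero, abs_of_pos Real.pi_pos]; ring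
  · intro θ _
    have h2 : x * Real.cos θ ≤ |x| := by
      calc x * Real.cos θ ≤ |x * Real.cos θ| := le_abs_self _
        _ = |x| * |Real.cos θ| := abs_mul _ _
        _ ≤ |x| * 1 := mul_le_mul_of_nonneg_left (Real.abs_cos_le_one θ) (abs_nonneg _)
        _ = |x| := mul_one _
    calc ‖c θ * Real.exp (x * Real.cos θ)‖ = |c θ| * Real.exp (x * Real.cos θ) := by
          rw [Real.norm_eq_abs, abs_mul, abs_of_pos (Real.exp_pos _)]
      _ ≤ 1 * Real.exp |x| :=
          mul_le_mul (hcb θ) (Real.exp_le_exp.mpr h2) (Real.exp_pos _).le zero_le_one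
      _ = Real.exp |x| := one_mul _

lemma abs_I0_le (x : ℝ) : |I0 x| ≤ Real.exp |x| := by
  unfold I0
  have h := trig_int_le (fun _ => 1) (fun θ => by norm_num) x
  simp only [one_mul] at h
  rw [abs_mul, abs_of_pos (by positivity : (0:ℝ) < 1 / Real.pi),
    div_mul_eq_mul_div, one_mul, div_le_iff₀ Real.pi_pos]
  calc |∫ θ in (0:ℝ)..Real.pi, Real.exp (x * Real.cos θ)| ≤ Real.pi * Real.exp |x| := h
    _ = Real.exp |x| * Real.pi := by ring

lemma abs_I1_le (x : ℝ) : |besselI1 x| ≤ Real.exp |x| := by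
  unfold besselI1
  have h := trig_int_le Real.cos (fun θ => Real.abs_cos_le_one θ) x
  rw [abs_mul, abs_of_pos (by positivity : (0:ℝ) < 1 / Real.pi),
    div_mul_eq_mul_div, one_mul, div_le_iff₀ Real.pi_pos]
  calc |∫ θ in (0:ℝ)..Real.pi, Real.cos θ * Real.exp (x * Real.cos θ)| ≤ Real.pi * Real.exp |x| := h
    _ = Real.exp |x| * Real.pi := by ring

lemma I1_pos {t : ℝ} (ht : 0 < t) : 0 < besselI1 t := by
  have cA : Continuous fun θ => Real.cos θ * Real.exp (t * Real.cos θ) := by fun_prop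
  have hsplit : (∫ θ in (0:ℝ)..Real.pi, Real.cos θ * Real.exp (t * Real.cos θ))
      = (∫ θ in (0:ℝ)..(Real.pi/2), Real.cos θ * Real.exp (t * Real.cos θ))
        + ∫ θ in (Real.pi/2)..Real.pi, Real.cos θ * Real.exp (t * Real.cos θ) :=
    (intervalIntegral.integral_add_adjacent_intervals (cA.intervalIntegrable _ _)
      (cA.intervalIntegrable _ _)).symm
  have hsub : (∫ θ in (Real.pi/2)..Real.pi, Real.cos θ * Real.exp (t * Real.cos θ))
      = ∫ θ in (0:ℝ)..(Real.pi/2), (- Real.cos θ) * Real.exp (- (t * Real.cos θ)) := by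
    have h := intervalIntegral.integral_comp_sub_left
      (a := (0:ℝ)) (b := Real.pi/2)
      (fun θ => Real.cos θ * Real.exp (t * Real.cos θ)) Real.pi
    rw [show Real.pi - Real.pi/2 = Real.pi/2 by ring, sub_zero] at h
    rw [← h]
    congr 1
    ext θ
    rw [Real.cos_pi_sub]
    ring_nf
  have hpos : 0 < ∫ θ in (0:ℝ)..(Real.pi/2),
      (Real.cos θ * Real.exp (t * Real.cos θ) + (- Real.cos θ) * Real.exp (- (t * Real.cos θ))) := by
    apply intervalIntegral.intervalIntegral_pos_of_pos_on
    · exact Continuous.intervalIntegrable (by fun_prop) _ _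
    · intro θ hθ
      have hc : 0 < Real.cos θ := Real.cos_pos_of_mem_Ioo
        ⟨by linarith [hθ.1, Real.pi_pos], hθ.2⟩
      have he : Real.exp (-(t * Real.cos θ)) < Real.exp (t * Real.cos θ) := by
        apply Real.exp_lt_exp.mpr
        nlinarith
      nlinarith
    · linarith [Real.pi_pos]
  rw [intervalIntegral.integral_add (cA.intervalIntegrable _ _)
    (Continuous.intervalIntegrable (by fun_prop) _ _)] at hpos
  unfold besselI1
  have h6 : 0 < ∫ θ in (0:ℝ)..Real.pi, Real.cos θ * Real.exp (t * Real.cos θ) := by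
    rw [hsplit, hsub]; exact hpos
  positivity

/-- `∂/∂a` of the Marcum Q integrand. -/
noncomputable def psiM (a x : ℝ) : ℝ :=
  x * Real.exp (-(x ^ 2 + a ^ 2) / 2) * (x * besselI1 (a * x) - a * I0 (a * x))

/-- Antiderivative (in `x`) of `-psiM`. -/
noncomputable def phiM (a x : ℝ) : ℝ :=
  Real.exp (-(x ^ 2 + a ^ 2) / 2) * (x * besselI1 (a * x))

lemma continuous_psiM (a : ℝ) : Continuous (psiM a) := by
  unfold psiM
  apply Continuous.mul
  · exact continuous_id.mul (Real.continuous_exp.comp (by fun_prop))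
  · exact (continuous_id.mul (continuous_I1.comp (continuous_const.mul continuous_id))).sub
      (continuous_const.mul (continuous_I0.comp (continuous_const.mul continuous_id)))

lemma hasDerivAt_exp_term (a x : ℝ) :
    HasDerivAt (fun a : ℝ => Real.exp (-(x ^ 2 + a ^ 2) / 2)) (Real.exp (-(x ^ 2 + a ^ 2) / 2) * (-a)) a := by
  have h : HasDerivAt (fun a : ℝ => -(x ^ 2 + a ^ 2) / 2) (-a) a := by
    have := (((hasDerivAt_pow 2 a).const_add (x ^ 2)).neg).div_const 2
    exact this.congr_deriv (by norm_num; ring)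
  exact h.exp

lemma hasDerivAt_inner_a (x a : ℝ) :
    HasDerivAt (fun a => x * Real.exp (-(x ^ 2 + a ^ 2) / 2) * I0 (a * x)) (psiM a x) a := by
  have h1 := (hasDerivAt_exp_term a x).const_mul x
  have h2 : HasDerivAt (fun a : ℝ => I0 (a * x)) (besselI1 (a * x) * x) a :=
    (hasDerivAt_I0 (a * x)).comp (h₂ := I0) a (hasDerivAt_mul_const x)
  have := h1.mul h2
  refine this.congr_deriv ?_
  unfold psiM
  ring

lemma hasDerivAt_phiM_x (a x : ℝ) :
    HasDerivAt (fun x => phiM a x) (-(psiM a x)) x := by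
  have h1 : HasDerivAt (fun x : ℝ => Real.exp (-(x ^ 2 + a ^ 2) / 2)) (Real.exp (-(x ^ 2 + a ^ 2) / 2) * (-x)) x := by
    have h : HasDerivAt (fun x : ℝ => -(x ^ 2 + a ^ 2) / 2) (-x) x := by
      have := (((hasDerivAt_pow 2 x).add_const (a ^ 2)).neg).div_const 2
      exact this.congr_deriv (by norm_num; ring)
    exact h.exp
  have h2 : HasDerivAt (fun x : ℝ => x * besselI1 (a * x))
      (besselI1 (a * x) + x * (besselJ (a * x) * a)) x := by
    have hI : HasDerivAt (fun x : ℝ => besselI1 (a * x)) (besselJ (a * x) * a) x :=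
      (hasDerivAt_I1 (a * x)).comp x (by simpa using (hasDerivAt_id x).const_mul a)
    exact ((hasDerivAt_id' x).mul hI).congr_deriv (by ring)
  have := h1.mul h2
  refine this.congr_deriv ?_
  unfold psiM
  have hid := bessel_identity (a * x)
  linear_combination (Real.exp (-(x ^ 2 + a ^ 2) / 2)) * hid

lemma psiM_bound {A a x : ℝ} (hA : 0 ≤ A) (ha : |a| ≤ A) (hx : 0 < x) :
    |psiM a x| ≤ 9 * (1 + A) * Real.exp (A ^ 2) * Real.exp (-(1/8) * x ^ 2) := by
  have hax : |a * x| ≤ A * x := by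
    rw [abs_mul, abs_of_pos hx]
    exact mul_le_mul_of_nonneg_right ha hx.le
  have hI1 : |besselI1 (a * x)| ≤ Real.exp (A * x) :=
    (abs_I1_le _).trans (Real.exp_le_exp.mpr hax)
  have hI0 : |I0 (a * x)| ≤ Real.exp (A * x) :=
    (abs_I0_le _).trans (Real.exp_le_exp.mpr hax)
  have h1 : |x * besselI1 (a * x) - a * I0 (a * x)| ≤ (x + A) * Real.exp (A * x) := by
    calc |x * besselI1 (a * x) - a * I0 (a * x)|
        ≤ |x * besselI1 (a * x)| + |a * I0 (a * x)| := abs_sub _ _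
      _ = x * |besselI1 (a * x)| + |a| * |I0 (a * x)| := by
          rw [abs_mul, abs_mul, abs_of_pos hx]
      _ ≤ x * Real.exp (A * x) + A * Real.exp (A * x) := by
          gcongr
      _ = (x + A) * Real.exp (A * x) := by ring
  have hexp1 : Real.exp (-(x ^ 2 + a ^ 2) / 2) ≤ Real.exp (-(x ^ 2) / 2) := by
    apply Real.exp_le_exp.mpr
    nlinarith [sq_nonneg a]
  have key : |psiM a x| ≤ x * (x + A) * Real.exp (-(x ^ 2) / 2 + A * x) := by
    unfold psiM
    rw [abs_mul, abs_mul, abs_of_pos hx, abs_of_pos (Real.exp_pos _), Real.exp_add]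
    calc x * Real.exp (-(x ^ 2 + a ^ 2) / 2) * |x * besselI1 (a * x) - a * I0 (a * x)|
        ≤ x * Real.exp (-(x ^ 2) / 2) * ((x + A) * Real.exp (A * x)) := by
          gcongr
      _ = x * (x + A) * (Real.exp (-(x ^ 2) / 2) * Real.exp (A * x)) := by ring
  have hpoly : x * (x + A) ≤ (1 + A) * (1 + x ^ 2) := by nlinarith [sq_nonneg (x - 1)]
  have hexp2 : Real.exp (-(x ^ 2) / 2 + A * x) ≤ Real.exp (A ^ 2) * Real.exp (-(1/4) * x ^ 2) := by
    rw [← Real.exp_add]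
    apply Real.exp_le_exp.mpr
    nlinarith [sq_nonneg (x / 2 - A)]
  have h9 : (1 + x ^ 2) * Real.exp (-(1/4) * x ^ 2) ≤ 9 * Real.exp (-(1/8) * x ^ 2) := by
    have hb : (1 + x ^ 2) ≤ 9 * Real.exp ((1/8) * x ^ 2) := by
      have := Real.add_one_le_exp ((1/8) * x ^ 2)
      nlinarith [Real.exp_pos ((1/8) * x ^ 2)]
    calc (1 + x ^ 2) * Real.exp (-(1/4) * x ^ 2)
        ≤ 9 * Real.exp ((1/8) * x ^ 2) * Real.exp (-(1/4) * x ^ 2) := by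
          gcongr
      _ = 9 * Real.exp (-(1/8) * x ^ 2) := by
          rw [mul_assoc, ← Real.exp_add]
          ring_nf
  calc |psiM a x| ≤ x * (x + A) * Real.exp (-(x ^ 2) / 2 + A * x) := key
    _ ≤ (1 + A) * (1 + x ^ 2) * (Real.exp (A ^ 2) * Real.exp (-(1/4) * x ^ 2)) := by
        gcongr
    _ = (1 + A) * Real.exp (A ^ 2) * ((1 + x ^ 2) * Real.exp (-(1/4) * x ^ 2)) := by ring
    _ ≤ (1 + A) * Real.exp (A ^ 2) * (9 * Real.exp (-(1/8) * x ^ 2)) := by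
        gcongr
    _ = 9 * (1 + A) * Real.exp (A ^ 2) * Real.exp (-(1/8) * x ^ 2) := by ring

lemma gM_bound {A a x : ℝ} (hA : 0 ≤ A) (ha : |a| ≤ A) (hx : 0 < x) :
    |x * Real.exp (-(x ^ 2 + a ^ 2) / 2) * I0 (a * x)|
      ≤ 9 * (1 + A) * Real.exp (A ^ 2) * Real.exp (-(1/8) * x ^ 2) := by
  have hax : |a * x| ≤ A * x := by
    rw [abs_mul, abs_of_pos hx]
    exact mul_le_mul_of_nonneg_right ha hx.le
  have hI0 : |I0 (a * x)| ≤ Real.exp (A * x) :=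
    (abs_I0_le _).trans (Real.exp_le_exp.mpr hax)
  have hexp1 : Real.exp (-(x ^ 2 + a ^ 2) / 2) ≤ Real.exp (-(x ^ 2) / 2) := by
    apply Real.exp_le_exp.mpr
    nlinarith [sq_nonneg a]
  have key : |x * Real.exp (-(x ^ 2 + a ^ 2) / 2) * I0 (a * x)|
      ≤ x * Real.exp (-(x ^ 2) / 2 + A * x) := by
    rw [abs_mul, abs_mul, abs_of_pos hx, abs_of_pos (Real.exp_pos _), Real.exp_add]
    calc x * Real.exp (-(x ^ 2 + a ^ 2) / 2) * |I0 (a * x)|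
        ≤ x * Real.exp (-(x ^ 2) / 2) * Real.exp (A * x) := by gcongr
      _ = x * (Real.exp (-(x ^ 2) / 2) * Real.exp (A * x)) := by ring
  have hpoly : x ≤ (1 + A) * (1 + x ^ 2) := by nlinarith [sq_nonneg (x - 1)]
  have hexp2 : Real.exp (-(x ^ 2) / 2 + A * x) ≤ Real.exp (A ^ 2) * Real.exp (-(1/4) * x ^ 2) := by
    rw [← Real.exp_add]
    apply Real.exp_le_exp.mpr
    nlinarith [sq_nonneg (x / 2 - A)]
  have h9 : (1 + x ^ 2) * Real.exp (-(1/4) * x ^ 2) ≤ 9 * Real.exp (-(1/8) * x ^ 2) := by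
    have hb : (1 + x ^ 2) ≤ 9 * Real.exp ((1/8) * x ^ 2) := by
      have := Real.add_one_le_exp ((1/8) * x ^ 2)
      nlinarith [Real.exp_pos ((1/8) * x ^ 2)]
    calc (1 + x ^ 2) * Real.exp (-(1/4) * x ^ 2)
        ≤ 9 * Real.exp ((1/8) * x ^ 2) * Real.exp (-(1/4) * x ^ 2) := by
          gcongr
      _ = 9 * Real.exp (-(1/8) * x ^ 2) := by
          rw [mul_assoc, ← Real.exp_add]
          ring_nf
  calc |x * Real.exp (-(x ^ 2 + a ^ 2) / 2) * I0 (a * x)|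
      ≤ x * Real.exp (-(x ^ 2) / 2 + A * x) := key
    _ ≤ (1 + A) * (1 + x ^ 2) * (Real.exp (A ^ 2) * Real.exp (-(1/4) * x ^ 2)) := by
        gcongr
    _ = (1 + A) * Real.exp (A ^ 2) * ((1 + x ^ 2) * Real.exp (-(1/4) * x ^ 2)) := by ring
    _ ≤ (1 + A) * Real.exp (A ^ 2) * (9 * Real.exp (-(1/8) * x ^ 2)) := by
        gcongr
    _ = 9 * (1 + A) * Real.exp (A ^ 2) * Real.exp (-(1/8) * x ^ 2) := by ring

lemma bound_integrable (C : ℝ) (b : ℝ) :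
    IntegrableOn (fun x : ℝ => C * Real.exp (-(1/8) * x ^ 2)) (Set.Ioi b) :=
  ((integrable_exp_neg_mul_sq (by norm_num : (0:ℝ) < 1/8)).const_mul C).integrableOn

lemma integrableOn_psiM {b : ℝ} (hb : 0 < b) (a : ℝ) :
    IntegrableOn (psiM a) (Set.Ioi b) := by
  apply Integrable.mono' (bound_integrable (9 * (1 + |a|) * Real.exp (|a| ^ 2)) b)
  · exact ((continuous_psiM a).aestronglyMeasurable).restrict
  · filter_upwards [ae_restrict_mem measurableSet_Ioi] with x hx
    have hx' : 0 < x := lt_trans hb hx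
    rw [Real.norm_eq_abs]
    calc |psiM a x| ≤ 9 * (1 + |a|) * Real.exp (|a| ^ 2) * Real.exp (-(1/8) * x ^ 2) :=
          psiM_bound (abs_nonneg a) le_rfl hx'
      _ = 9 * (1 + |a|) * Real.exp (|a| ^ 2) * Real.exp (-(1/8) * x ^ 2) := rfl

lemma tendsto_phiM (a : ℝ) : Tendsto (fun x => phiM a x) atTop (nhds 0) := by
  apply squeeze_zero_norm' (a := fun x => x * Real.exp (-x))
  · filter_upwards [eventually_ge_atTop (4 * (|a| + 1))] with x hx
    have hx0 : 0 < x := lt_of_lt_of_le (by positivity) hx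
    have hI1 : |besselI1 (a * x)| ≤ Real.exp (|a| * x) := by
      apply (abs_I1_le _).trans
      apply Real.exp_le_exp.mpr
      rw [abs_mul, abs_of_pos hx0]
    have hexp : Real.exp (-(x ^ 2 + a ^ 2) / 2) ≤ Real.exp (-(x ^ 2) / 2) := by
      apply Real.exp_le_exp.mpr
      nlinarith [sq_nonneg a]
    have key : ‖phiM a x‖ ≤ x * Real.exp (-(x ^ 2) / 2 + |a| * x) := by
      unfold phiM
      rw [Real.norm_eq_abs, abs_mul, abs_mul, abs_of_pos (Real.exp_pos _), abs_of_pos hx0,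
        Real.exp_add]
      calc Real.exp (-(x ^ 2 + a ^ 2) / 2) * (x * |besselI1 (a * x)|)
          ≤ Real.exp (-(x ^ 2) / 2) * (x * Real.exp (|a| * x)) := by gcongr
        _ = x * (Real.exp (-(x ^ 2) / 2) * Real.exp (|a| * x)) := by ring
    apply key.trans
    have hexp3 : Real.exp (-(x ^ 2) / 2 + |a| * x) ≤ Real.exp (-x) := by
      apply Real.exp_le_exp.mpr
      have h1 : |a| * x ≤ x ^ 2 / 4 := by nlinarith [abs_nonneg a]
      have h2 : x ≤ x ^ 2 / 4 := by nlinarith [abs_nonneg a]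
      linarith
    exact mul_le_mul_of_nonneg_left hexp3 hx0.le
  · have h := Real.tendsto_pow_mul_exp_neg_atTop_nhds_zero 1
    simpa using h

lemma integral_psiM {b : ℝ} (hb : 0 < b) (a : ℝ) :
    ∫ x in Set.Ioi b, psiM a x = phiM a b := by
  have h := MeasureTheory.integral_Ioi_of_hasDerivAt_of_tendsto
    (f := phiM a) (f' := fun x => -(psiM a x)) (a := b) (m := 0)
    (hasDerivAt_phiM_x a b).continuousAt.continuousWithinAt
    (fun x _ => hasDerivAt_phiM_x a x)
    ((integrableOn_psiM hb a).neg)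
    (tendsto_phiM a)
  rw [MeasureTheory.integral_neg] at h
  linarith [h]

lemma hasDerivAt_marcumQ {b : ℝ} (hb : 0 < b) (a₀ : ℝ) :
    HasDerivAt (fun a => marcumQ a b) (phiM a₀ b) a₀ := by
  set A : ℝ := |a₀| + 1 with hA
  have hA0 : 0 ≤ A := by positivity
  have key := _root_.hasDerivAt_integral_of_dominated_loc_of_deriv_le
    (μ := volume.restrict (Set.Ioi b))
    (F := fun a x => x * Real.exp (-(x ^ 2 + a ^ 2) / 2) * I0 (a * x))
    (F' := fun a x => psiM a x) (x₀ := a₀)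
    (bound := fun x => 9 * (1 + A) * Real.exp (A ^ 2) * Real.exp (-(1/8) * x ^ 2))
    (Metric.ball_mem_nhds a₀ (by norm_num : (0:ℝ) < 1)) ?_ ?_ ?_ ?_ ?_ ?_
  · rw [show (∫ x, psiM a₀ x ∂(volume.restrict (Set.Ioi b))) = phiM a₀ b from integral_psiM hb a₀] at key
    exact key.2
  · filter_upwards with a
    exact (Continuous.aestronglyMeasurable (by fun_prop)).restrict
  · apply Integrable.mono' (bound_integrable (9 * (1 + A) * Real.exp (A ^ 2)) b)
    · exact (Continuous.aestronglyMeasurable (by fun_prop)).restrict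
    · filter_upwards [ae_restrict_mem measurableSet_Ioi] with x hx
      have hx' : 0 < x := lt_trans hb hx
      rw [Real.norm_eq_abs]
      exact gM_bound hA0 (by rw [hA]; linarith : |a₀| ≤ A) hx'
  · exact ((continuous_psiM a₀).aestronglyMeasurable).restrict
  · filter_upwards [ae_restrict_mem measurableSet_Ioi] with x hx a ha
    have hx' : 0 < x := lt_trans hb hx
    have ha' : |a| ≤ A := by
      have := mem_ball_iff_norm.mp ha
      have h2 : |a - a₀| < 1 := this
      calc |a| = |a₀ + (a - a₀)| := by ring_nf
        _ ≤ |a₀| + |a - a₀| := abs_add_le _ _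
        _ ≤ A := by rw [hA]; linarith
    rw [Real.norm_eq_abs]
    exact psiM_bound hA0 ha' hx'
  · exact bound_integrable _ b
  · filter_upwards [ae_restrict_mem measurableSet_Ioi] with x hx a ha
    exact hasDerivAt_inner_a x a

theorem stmt_10 (b : ℝ) (hb : 0 < b) (a₁ a₂ : ℝ) (ha₁ : 0 ≤ a₁) (h : a₁ < a₂) :
    marcumQ a₁ b < marcumQ a₂ b := by
  have hmono : StrictMonoOn (fun a => marcumQ a b) (Set.Icc a₁ a₂) := by
    apply strictMonoOn_of_deriv_pos (convex_Icc a₁ a₂)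
    · intro a _
      exact (hasDerivAt_marcumQ hb a).continuousAt.continuousWithinAt
    · intro a ha
      rw [interior_Icc] at ha
      rw [(hasDerivAt_marcumQ hb a).deriv]
      have ha0 : 0 < a := lt_of_le_of_lt ha₁ ha.1
      have : 0 < besselI1 (a * b) := I1_pos (by positivity)
      unfold phiM
      positivity
  exact hmono (Set.left_mem_Icc.mpr h.le) (Set.right_mem_Icc.mpr h.le) h
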